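/- arXiv:1604.07066 — 2 statements merged into one kernel-verified Lean document; each statement's English description precedes it below -/
import Mathlib

section
/- Let G be a finite group, H ≤ G, and let S be a simple real G-module with G-invariant inner product whose Wythoff space W = Fix_S(H) has dimension 1 over 𝔻 = End_{ℝG}(S). Then for any w ∈ W with ⟨w,w⟩ = 1 and any g ∈ G, the number (|HgH ∪ Hg⁻¹H| / |H|)·⟨w·g, w⟩ is an algebraic integer. In particular, all entries of the cosine vector ⟨w·g, w⟩ are algebraic numbers. -/
/-!
Put `K = HgH ∪ Hg⁻¹H` and `A = ∑_{x ∈ K} ρ x`. As `K = K⁻¹` and `ρ` is orthogonal, `A` is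
self-adjoint; as `HK = K`, it maps `W = Fix_S(H)` into itself; and it commutes with `𝔻`.
So `A` has a real eigenvector in `W`, of the form `d w` with `d ∈ 𝔻`, and `d` is injective
by Schur: `d (A w - μ w) = A (d w) - μ d w = 0` gives `A w = μ w`, where `μ = |K| ⟪w g, w⟫`.
As `KH = K`, `(μ / |H|) • ρ y w = |H|⁻¹ ∑_{x ∈ K} ρ (y x) w` is a sum over representatives
of `K / H`, so `μ / |H|` preserves the finitely generated lattice `ℤ[G] w`, hence is integral.
-/

open scoped InnerProductSpace

namespace DoubleCoset

variable {G : Type*} [Group G] {H K : Subgroup G} {a x : G}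

theorem mul_mem_of_mem_left {h : G} (hh : h ∈ H) (hx : x ∈ doubleCoset a H K) :
    h * x ∈ doubleCoset a H K := by
  obtain ⟨b, hb, c, hc, rfl⟩ := mem_doubleCoset.1 hx
  exact mem_doubleCoset.2 ⟨h * b, H.mul_mem hh hb, c, hc, by group⟩

theorem mul_mem_of_mem_right {k : G} (hx : x ∈ doubleCoset a H K) (hk : k ∈ K) :
    x * k ∈ doubleCoset a H K := by
  obtain ⟨b, hb, c, hc, rfl⟩ := mem_doubleCoset.1 hx
  exact mem_doubleCoset.2 ⟨b, hb, c * k, K.mul_mem hc hk, by group⟩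

theorem inv_mem_doubleCoset_inv (hx : x ∈ doubleCoset a H K) :
    x⁻¹ ∈ doubleCoset a⁻¹ K H := by
  obtain ⟨b, hb, c, hc, rfl⟩ := mem_doubleCoset.1 hx
  exact mem_doubleCoset.2 ⟨c⁻¹, K.inv_mem hc, b⁻¹, H.inv_mem hb, by group⟩

theorem mul_mem_doubleCoset_union_inv_left {h : G} (hh : h ∈ H)
    (hx : x ∈ doubleCoset a H H ∪ doubleCoset a⁻¹ H H) :
    h * x ∈ doubleCoset a H H ∪ doubleCoset a⁻¹ H H :=
  hx.imp (mul_mem_of_mem_left hh) (mul_mem_of_mem_left hh)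

theorem mul_mem_doubleCoset_union_inv_right {h : G}
    (hx : x ∈ doubleCoset a H H ∪ doubleCoset a⁻¹ H H) (hh : h ∈ H) :
    x * h ∈ doubleCoset a H H ∪ doubleCoset a⁻¹ H H :=
  hx.imp (mul_mem_of_mem_right · hh) (mul_mem_of_mem_right · hh)

theorem inv_mem_doubleCoset_union_inv (hx : x ∈ doubleCoset a H H ∪ doubleCoset a⁻¹ H H) :
    x⁻¹ ∈ doubleCoset a H H ∪ doubleCoset a⁻¹ H H :=
  hx.symm.imp (inv_inv a ▸ inv_mem_doubleCoset_inv ·) inv_mem_doubleCoset_inv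

end DoubleCoset

theorem isIntegral_of_forall_smul_mem_span {k M ι : Type*} [Field k] [AddCommGroup M]
    [Module k M] [Finite ι] (v : ι → M) {i₀ : ι} (hv : v i₀ ≠ 0) (c : k)
    (hc : ∀ i, c • v i ∈ Submodule.span ℤ (Set.range v)) : IsIntegral ℤ c := by
  refine isIntegral_of_smul_mem_submodule _ (fun h ↦ hv ?_)
    (Submodule.fg_span (Set.finite_range v)) c fun n hn ↦ ?_
  · exact (Submodule.mem_bot ℤ).1 (h ▸ Submodule.subset_span ⟨i₀, rfl⟩)
  induction hn using Submodule.span_induction with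
  | mem _ hx => obtain ⟨i, rfl⟩ := hx; exact hc i
  | zero => rw [smul_zero]; exact Submodule.zero_mem _
  | add _ _ _ _ hx hy => rw [smul_add]; exact Submodule.add_mem _ hx hy
  | smul n _ _ hx => rw [smul_comm]; exact Submodule.smul_mem _ n hx

open Finset in
theorem Subgroup.exists_sum_eq_card_smul_sum {G : Type*} [Group G] (H : Subgroup G) [Finite H]
    {M : Type*} [AddCommMonoid M] (K : Finset G) (hK : ∀ x ∈ K, ∀ h ∈ H, x * h ∈ K)
    (f : G → M) (hf : ∀ x, ∀ h ∈ H, f (x * h) = f x) :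
    ∃ T : Finset G, ∑ x ∈ K, f x = Nat.card H • ∑ x ∈ T, f x := by
  classical
  have := Fintype.ofFinite H
  set π : G → G ⧸ H := QuotientGroup.mk
  have hf_out (x : G) : f (π x).out = f x := by
    obtain ⟨h, hh⟩ := QuotientGroup.mk_out_eq_mul H x
    rw [hh, hf x h h.2]
  have hfiber : ∀ x₀ ∈ K, #{x ∈ K | π x = π x₀} = Nat.card H := by
    intro x₀ hx₀
    have : {x ∈ K | π x = π x₀} = (univ : Finset H).map
        ⟨fun h : H ↦ x₀ * h, (mul_right_injective x₀).comp Subtype.val_injective⟩ := by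
      refine Finset.ext fun x ↦ ?_
      simp only [Finset.mem_filter, Finset.mem_map, Finset.mem_univ, true_and,
        Function.Embedding.coeFn_mk, π, QuotientGroup.eq]
      constructor
      · rintro ⟨-, hx⟩
        exact ⟨⟨_, H.inv_mem hx⟩, by simp⟩
      · rintro ⟨h, rfl⟩
        exact ⟨hK x₀ hx₀ h h.2, by simp⟩
    rw [this, card_map, card_univ, Nat.card_eq_fintype_card]
  refine ⟨(K.image π).image Quotient.out, ?_⟩
  rw [sum_image Quotient.out_injective.injOn, smul_sum]
  calc ∑ x ∈ K, f x = ∑ x ∈ K, f (π x).out := by simp only [hf_out]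
    _ = ∑ q ∈ K.image π, #{x ∈ K | π x = q} • f q.out := sum_comp (fun q ↦ f q.out) π
    _ = _ := sum_congr rfl <| forall_mem_image.2 fun x₀ hx₀ ↦ by rw [hfiber x₀ hx₀]

namespace Representation

section

variable {k G V : Type*} [CommRing k] [Group G] [AddCommGroup V] [Module k V]
  (ρ : Representation k G V)

theorem injective_of_commute
    (hsimple : ∀ W : Submodule k V, (∀ g, ∀ x ∈ W, ρ g x ∈ W) → W = ⊥ ∨ W = ⊤)
    {d : Module.End k V} (hd : ∀ g, Commute d (ρ g)) {v : V} (hv : d v ≠ 0) :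
    Function.Injective d := by
  have hker : ∀ g, ∀ x ∈ LinearMap.ker d, ρ g x ∈ LinearMap.ker d := fun g x hx ↦ by
    rw [LinearMap.mem_ker] at hx ⊢
    rw [← Module.End.mul_apply, (hd g).eq, Module.End.mul_apply, hx, map_zero]
  refine LinearMap.ker_eq_bot.1 ((hsimple _ hker).resolve_right fun htop ↦ hv ?_)
  exact LinearMap.mem_ker.1 (htop ▸ Submodule.mem_top)

theorem sum_apply_mem_invariants (H : Subgroup G) (K : Finset G)
    (hK : ∀ h ∈ H, ∀ x ∈ K, h * x ∈ K) (v : V) :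
    (∑ x ∈ K, ρ x) v ∈ invariants (ρ.comp H.subtype) := by
  rintro ⟨h, hh⟩
  simp only [MonoidHom.coe_comp, Function.comp_apply, Subgroup.coe_subtype,
    LinearMap.sum_apply, map_sum]
  refine Finset.sum_nbij' (h * ·) (h⁻¹ * ·) (hK h hh) (hK _ (H.inv_mem hh))
    (fun _ _ ↦ inv_mul_cancel_left _ _) (fun _ _ ↦ mul_inv_cancel_left _ _) fun x _ ↦ ?_
  rw [map_mul, Module.End.mul_apply]

end

theorem isIntegral_div_card_of_sum_apply_eq_smul {k G V : Type*} [Field k] [CharZero k]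
    [Group G] [Finite G] [AddCommGroup V] [Module k V] (ρ : Representation k G V)
    (H : Subgroup G) {w : V} (hwH : ∀ h ∈ H, ρ h w = w) (hw : w ≠ 0)
    (K : Finset G) (hK : ∀ x ∈ K, ∀ h ∈ H, x * h ∈ K) {μ : k}
    (hμ : (∑ x ∈ K, ρ x) w = μ • w) : IsIntegral ℤ (μ / Nat.card H) := by
  have hH : (Nat.card H : k) ≠ 0 := Nat.cast_ne_zero.2 Nat.card_pos.ne'
  refine isIntegral_of_forall_smul_mem_span (fun y ↦ ρ y w) (i₀ := 1) (by simpa using hw) _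
    fun y ↦ ?_
  obtain ⟨T, hT⟩ := H.exists_sum_eq_card_smul_sum K hK (fun x ↦ ρ (y * x) w)
    fun x h hh ↦ by rw [← mul_assoc, map_mul, Module.End.mul_apply, hwH h hh]
  have hsmul : (μ / Nat.card H) • ρ y w = ∑ x ∈ T, ρ (y * x) w := by
    calc (μ / Nat.card H) • ρ y w = (Nat.card H : k)⁻¹ • ρ y ((∑ x ∈ K, ρ x) w) := by
          rw [hμ, map_smul, smul_smul, div_eq_inv_mul]
      _ = (Nat.card H : k)⁻¹ • ∑ x ∈ K, ρ (y * x) w := by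
          simp only [LinearMap.sum_apply, map_sum, map_mul, Module.End.mul_apply]
      _ = ∑ x ∈ T, ρ (y * x) w := by
          rw [hT, ← Nat.cast_smul_eq_nsmul k, smul_smul, inv_mul_cancel₀ hH, one_smul]
  rw [hsmul]
  exact Submodule.sum_mem _ fun x _ ↦ Submodule.subset_span ⟨y * x, rfl⟩

variable {G S : Type*} [Group G] [NormedAddCommGroup S] [InnerProductSpace ℝ S]
  (ρ : Representation ℝ G S)

theorem inner_inv_apply_left (horth : ∀ g (u v : S), ⟪ρ g u, ρ g v⟫_ℝ = ⟪u, v⟫_ℝ)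
    (g : G) (u v : S) : ⟪ρ g⁻¹ u, v⟫_ℝ = ⟪u, ρ g v⟫_ℝ := by
  rw [← horth g, self_inv_apply]

theorem inner_apply_eq_of_mem_doubleCoset
    (horth : ∀ g (u v : S), ⟪ρ g u, ρ g v⟫_ℝ = ⟪u, v⟫_ℝ) (H : Subgroup G) {w : S}
    (hwH : ∀ h ∈ H, ρ h w = w) {a x : G} (hx : x ∈ DoubleCoset.doubleCoset a H H) :
    ⟪ρ x w, w⟫_ℝ = ⟪ρ a w, w⟫_ℝ := by
  obtain ⟨b, hb, c, hc, rfl⟩ := DoubleCoset.mem_doubleCoset.1 hx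
  rw [map_mul, map_mul, Module.End.mul_apply, Module.End.mul_apply, hwH c hc, ← horth b⁻¹,
    inv_self_apply, hwH _ (H.inv_mem hb)]

theorem inner_apply_eq_of_mem_doubleCoset_union_inv
    (horth : ∀ g (u v : S), ⟪ρ g u, ρ g v⟫_ℝ = ⟪u, v⟫_ℝ) (H : Subgroup G) {w : S}
    (hwH : ∀ h ∈ H, ρ h w = w) {a x : G}
    (hx : x ∈ DoubleCoset.doubleCoset a H H ∪ DoubleCoset.doubleCoset a⁻¹ H H) :
    ⟪ρ x w, w⟫_ℝ = ⟪ρ a w, w⟫_ℝ := by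
  rcases hx with hx | hx
  · exact inner_apply_eq_of_mem_doubleCoset ρ horth H hwH hx
  · rw [inner_apply_eq_of_mem_doubleCoset ρ horth H hwH hx, inner_inv_apply_left ρ horth,
      real_inner_comm]

theorem isSymmetric_sum_of_inv_mem
    (horth : ∀ g (u v : S), ⟪ρ g u, ρ g v⟫_ℝ = ⟪u, v⟫_ℝ)
    (K : Finset G) (hK : ∀ x ∈ K, x⁻¹ ∈ K) : (∑ x ∈ K, ρ x).IsSymmetric := by
  intro u v
  simp only [LinearMap.sum_apply, sum_inner, inner_sum]
  exact Finset.sum_nbij' (·⁻¹) (·⁻¹) hK hK (fun _ _ ↦ inv_inv _) (fun _ _ ↦ inv_inv _)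
    fun x _ ↦ by rw [← inner_inv_apply_left ρ horth, inv_inv]

theorem exists_apply_eq_smul_of_isSymmetric [FiniteDimensional ℝ S]
    (hsimple : ∀ W : Submodule ℝ S, (∀ g, ∀ x ∈ W, ρ g x ∈ W) → W = ⊥ ∨ W = ⊤)
    (W : Submodule ℝ S) {w : S} (hwW : w ∈ W) (hw : w ≠ 0)
    (hspan : ∀ v ∈ W, ∃ d : Module.End ℝ S, (∀ g, Commute d (ρ g)) ∧ v = d w)
    {A : Module.End ℝ S} (hA : A.IsSymmetric) (hAW : ∀ v ∈ W, A v ∈ W)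
    (hAcomm : ∀ d : Module.End ℝ S, (∀ g, Commute d (ρ g)) → Commute A d) :
    ∃ c : ℝ, A w = c • w := by
  have : Nontrivial W := ⟨⟨⟨w, hwW⟩, 0, fun h ↦ hw congr($h.1)⟩⟩
  obtain ⟨c, hc⟩ : ∃ c, Module.End.HasEigenvalue (A.restrict hAW) c :=
    ⟨_, (hA.restrict_invariant hAW).hasEigenvalue_iSup_of_finiteDimensional⟩
  obtain ⟨v, hv⟩ := hc.exists_hasEigenvector
  have hAv : A v = c • (v : S) := congr($(hv.apply_eq_smul).1)
  obtain ⟨d, hd, hvd⟩ := hspan v v.2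
  have hdw : d w ≠ 0 := hvd ▸ fun h ↦ hv.2 (Subtype.ext h)
  refine ⟨c, injective_of_commute ρ hsimple hd hdw ?_⟩
  rw [map_smul, ← hvd, ← hAv, hvd, ← Module.End.mul_apply, ← (hAcomm d hd).eq,
    Module.End.mul_apply]

theorem exists_sum_apply_eq_smul_isIntegral [Finite G] [FiniteDimensional ℝ S]
    (horth : ∀ g (u v : S), ⟪ρ g u, ρ g v⟫_ℝ = ⟪u, v⟫_ℝ)
    (hsimple : ∀ W : Submodule ℝ S, (∀ g, ∀ x ∈ W, ρ g x ∈ W) → W = ⊥ ∨ W = ⊤)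
    (H : Subgroup G) {w : S} (hwH : w ∈ invariants (ρ.comp H.subtype)) (hw : w ≠ 0)
    (hspan : ∀ v ∈ invariants (ρ.comp H.subtype),
      ∃ d : Module.End ℝ S, (∀ g, Commute d (ρ g)) ∧ v = d w)
    (K : Finset G) (hK_inv : ∀ x ∈ K, x⁻¹ ∈ K)
    (hK_left : ∀ h ∈ H, ∀ x ∈ K, h * x ∈ K) (hK_right : ∀ x ∈ K, ∀ h ∈ H, x * h ∈ K) :
    ∃ μ : ℝ, (∑ x ∈ K, ρ x) w = μ • w ∧ IsIntegral ℤ (μ / Nat.card H) := by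
  obtain ⟨μ, hμ⟩ := ρ.exists_apply_eq_smul_of_isSymmetric hsimple _ hwH hw hspan
    (ρ.isSymmetric_sum_of_inv_mem horth K hK_inv)
    (fun v _ ↦ ρ.sum_apply_mem_invariants H K hK_left v)
    (fun d hd ↦ Commute.sum_left _ _ _ fun x _ ↦ (hd x).symm)
  exact ⟨μ, hμ, ρ.isIntegral_div_card_of_sum_apply_eq_smul H (fun h hh ↦ hwH ⟨h, hh⟩) hw
    K hK_right hμ⟩

end Representation

theorem stmt16_general {G : Type} [Group G] [Finite G] (H : Subgroup G)
    {S : Type} [NormedAddCommGroup S] [InnerProductSpace ℝ S] [FiniteDimensional ℝ S]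
    (ρ : Representation ℝ G S)
    (horth : ∀ g (u v : S), ⟪ρ g u, ρ g v⟫_ℝ = ⟪u, v⟫_ℝ)
    (hsimple : ∀ W : Submodule ℝ S, (∀ g, ∀ x ∈ W, ρ g x ∈ W) → W = ⊥ ∨ W = ⊤)
    (w : S) (hwfix : ∀ h ∈ H, ρ h w = w) (hnorm : ⟪w, w⟫_ℝ = 1)
    -- `W = Fix_S(H)` is one-dimensional over `𝔻`, spanned by `w`:
    (hspan : ∀ v : S, (∀ h ∈ H, ρ h v = v) →
      ∃ d : S →ₗ[ℝ] S, (∀ g, d ∘ₗ ρ g = ρ g ∘ₗ d) ∧ v = d w) :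
    ∀ g : G,
      IsIntegral ℤ
        (((Nat.card ↥(DoubleCoset.doubleCoset g (H : Set G) (H : Set G)
              ∪ DoubleCoset.doubleCoset g⁻¹ (H : Set G) (H : Set G)) : ℝ)
          / (Nat.card H : ℝ)) * ⟪ρ g w, w⟫_ℝ) ∧
      IsAlgebraic ℚ ⟪ρ g w, w⟫_ℝ := by
  intro g
  classical
  have := Fintype.ofFinite G
  set D := DoubleCoset.doubleCoset g H H ∪ DoubleCoset.doubleCoset g⁻¹ H H
  have hw : w ≠ 0 := by rintro rfl; simp at hnorm
  have hD_inv : ∀ x ∈ D.toFinset, x⁻¹ ∈ D.toFinset := fun x hx ↦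
    Set.mem_toFinset.2 <| DoubleCoset.inv_mem_doubleCoset_union_inv (Set.mem_toFinset.1 hx)
  have hD_left : ∀ h ∈ H, ∀ x ∈ D.toFinset, h * x ∈ D.toFinset := fun h hh x hx ↦
    Set.mem_toFinset.2 <| DoubleCoset.mul_mem_doubleCoset_union_inv_left hh (Set.mem_toFinset.1 hx)
  have hD_right : ∀ x ∈ D.toFinset, ∀ h ∈ H, x * h ∈ D.toFinset := fun x hx h hh ↦
    Set.mem_toFinset.2 <| DoubleCoset.mul_mem_doubleCoset_union_inv_right (Set.mem_toFinset.1 hx) hh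
  obtain ⟨μ, hμ, hint⟩ := ρ.exists_sum_apply_eq_smul_isIntegral horth hsimple H
    (fun h ↦ hwfix h h.2) hw (fun v hv ↦ hspan v fun h hh ↦ hv ⟨h, hh⟩)
    _ hD_inv hD_left hD_right
  have hμ_eq : (Nat.card D : ℝ) * ⟪ρ g w, w⟫_ℝ = μ := by
    have hD_inner (x) (hx : x ∈ D.toFinset) : ⟪ρ x w, w⟫_ℝ = ⟪ρ g w, w⟫_ℝ :=
      ρ.inner_apply_eq_of_mem_doubleCoset_union_inv horth H hwfix (Set.mem_toFinset.1 hx)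
    have := congr(⟪$hμ, w⟫_ℝ)
    rwa [LinearMap.sum_apply, sum_inner, Finset.sum_congr rfl hD_inner, Finset.sum_const,
      nsmul_eq_mul, real_inner_smul_left, hnorm, mul_one, ← Nat.card_eq_card_toFinset] at this
  have hD : (Nat.card D : ℝ) ≠ 0 := Nat.cast_ne_zero.2 <|
    Nat.card_ne_zero.2 ⟨⟨g, .inl (DoubleCoset.mem_doubleCoset_self ..)⟩, inferInstance⟩
  have hH : (Nat.card H : ℝ) ≠ 0 := Nat.cast_ne_zero.2 Nat.card_pos.ne'
  rw [div_mul_eq_mul_div, hμ_eq]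
  refine ⟨hint, .of_mul (mem_nonZeroDivisors_of_ne_zero hD) (isAlgebraic_natCast _) ?_⟩
  rw [hμ_eq, ← div_mul_cancel₀ μ hH]
  exact (hint.tower_top (A := ℚ)).isAlgebraic.mul (isAlgebraic_natCast _)

/-- If the Wythoff space `W = Fix_S(H)` of a simple real `G`-module
`S` is one-dimensional over `𝔻 = End_{ℝG}(S)`, then for unit `w ∈ W` and `g ∈ G`
the number `(|HgH ∪ Hg⁻¹H|/|H|)·⟨w·g,w⟩` is an algebraic integer; in particular all
entries `⟨w·g,w⟩` of the cosine vector are algebraic numbers. -/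
theorem stmt16 {G : Type} [Group G] [Finite G] (H : Subgroup G)
    {S : Type} [NormedAddCommGroup S] [InnerProductSpace ℝ S] [FiniteDimensional ℝ S]
    (ρ : Representation ℝ G S)
    (horth : ∀ g (u v : S), ⟪ρ g u, ρ g v⟫_ℝ = ⟪u, v⟫_ℝ)
    (hnt : Nontrivial S)
    (hsimple : ∀ W : Submodule ℝ S, (∀ g, ∀ x ∈ W, ρ g x ∈ W) → W = ⊥ ∨ W = ⊤)
    (w : S) (hwfix : ∀ h ∈ H, ρ h w = w) (hnorm : ⟪w, w⟫_ℝ = 1)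
    -- `W = Fix_S(H)` is one-dimensional over `𝔻`, spanned by `w`:
    (hspan : ∀ v : S, (∀ h ∈ H, ρ h v = v) →
      ∃ d : S →ₗ[ℝ] S, (∀ g, d ∘ₗ ρ g = ρ g ∘ₗ d) ∧ v = d w) :
    ∀ g : G,
      IsIntegral ℤ
        (((Nat.card ↥(DoubleCoset.doubleCoset g (H : Set G) (H : Set G)
              ∪ DoubleCoset.doubleCoset g⁻¹ (H : Set G) (H : Set G)) : ℝ)
          / (Nat.card H : ℝ)) * ⟪ρ g w, w⟫_ℝ) ∧
      IsAlgebraic ℚ ⟪ρ g w, w⟫_ℝ :=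
  stmt16_general H ρ horth hsimple w hwfix hnorm hspan
end

section
/- Let U be a finite group, G = U ≀ C₂, N = U × U, H = {1,t}·{(u,u): u ∈ U}. Let V be an irreducible real G-inner-product-space containing a nonzero H-fixed vector w, with irreducible complex character χ restricting on N to φ × φ with φ = φ̄ ∈ Irr U and χ(t(u,v)) = ν₂(φ)·φ(uv). Then for every n = (x,y) ∈ N: ⟨w·n, w⟩/⟨w,w⟩ = φ(x⁻¹y)/φ(1). -/
/-- The coordinate-swap automorphism of `U × U`. -/
def swapAut (U : Type) [Group U] : MulAut (U × U) :=
  { Equiv.prodComm U U with map_mul' := fun _ _ => rfl }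

/-- The action of `C₂` on `U × U` by swapping coordinates. -/
def wrAct (U : Type) [Group U] : Multiplicative (ZMod 2) →* MulAut (U × U) where
  toFun x := if x.toAdd = 0 then 1 else swapAut U
  map_one' := by simp
  map_mul' := by
    intro x y
    have h2 : ∀ z : ZMod 2, z = 0 ∨ z = 1 := by decide
    have hsq : swapAut U * swapAut U = 1 := MulEquiv.ext fun _ => rfl
    rcases h2 x.toAdd with hx | hx <;> rcases h2 y.toAdd with hy | hy <;>
      simp [toAdd_mul, hx, hy, hsq, (by decide : (1 + 1 : ZMod 2) = 0)]

/-- The wreath product `U ≀ C₂`: the semidirect product of `C₂ = {1,t}` acting on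
`N = U × U` by swapping coordinates. -/
abbrev Wr (U : Type) [Group U] :=
  SemidirectProduct (U × U) (Multiplicative (ZMod 2)) (wrAct U)

/-- The swapping element `t` of `U ≀ C₂`. -/
def tEl (U : Type) [Group U] : Wr U := SemidirectProduct.inr (Multiplicative.ofAdd 1)

/-- `χ : G → ℂ` is a (complex) character of `G`. -/
def IsChar (G : Type) [Group G] (χ : G → ℂ) : Prop :=
  ∃ (V : Type) (_ : AddCommGroup V) (_ : Module ℂ V) (_ : FiniteDimensional ℂ V)
    (τ : Representation ℂ G V), ∀ g, χ g = LinearMap.trace ℂ V (τ g)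

/-- `χ : G → ℂ` is an irreducible complex character of `G`. -/
def IsIrrChar (G : Type) [Group G] (χ : G → ℂ) : Prop :=
  ∃ (V : Type) (_ : AddCommGroup V) (_ : Module ℂ V) (_ : FiniteDimensional ℂ V)
    (τ : Representation ℂ G V), Nontrivial V ∧
      (∀ W : Submodule ℂ V, (∀ g, ∀ x ∈ W, τ g x ∈ W) → W = ⊥ ∨ W = ⊤) ∧
      ∀ g, χ g = LinearMap.trace ℂ V (τ g)

/-- The character of `U ≀ C₂` induced from the character `φ × θ` of `N = U × U`. -/
noncomputable def indChar {U : Type} [Group U] (φ θ : U → ℂ) : Wr U → ℂ :=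
  fun g => (Nat.card (U × U) : ℂ)⁻¹ *
    ∑ᶠ x : Wr U, if (x * g * x⁻¹).right = 1
      then φ ((x * g * x⁻¹).left.1) * θ ((x * g * x⁻¹).left.2) else 0

open scoped InnerProductSpace

/-- The subgroup `H = {1,t}·{(u,u) : u ∈ U}` of `U ≀ C₂`. -/
def Hdiag (U : Type) [Group U] : Subgroup (Wr U) :=
  Subgroup.closure ({tEl U} ∪ Set.range (fun u : U => SemidirectProduct.inl (u, u)))

/-!
Let `P` be the average of `ρ` over the diagonal `{(u, u)}`. It is a projection onto the
diagonal-invariant vectors, and its trace is `|U|⁻¹ ∑ φ(u)² = 1` by the orthogonality relations;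
`φ` is real-valued because `ρ` is orthogonal, so `χ(g⁻¹) = χ(g)`. Hence the invariants are the
line `ℝ w`, and since `⟨P v, w⟩ = ⟨v, w⟩`, we get `⟨A w, w⟩ = tr(P A) ⟨w, w⟩` for every `A`.
For `A = ρ(x, y)` this trace is `|U|⁻¹ ∑ φ(u x) φ(u y)`, and Schur's lemma applied to the
central element `∑ φ(g⁻¹) g` turns it into `φ(x⁻¹ y) / φ(1)`.
-/

open LinearMap Module

theorem LinearMap.IsProj.apply_apply_eq_trace_mul_smul {K M : Type*} [Field K] [AddCommGroup M]
    [Module K M] [FiniteDimensional K M] {P : Module.End K M} {w : M} (hP : IsProj (K ∙ w) P)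
    (A : Module.End K M) : P (A w) = LinearMap.trace K M (P * A) • w := by
  rcases eq_or_ne w 0 with rfl | hw
  · simp
  obtain ⟨α, hα⟩ := Submodule.mem_span_singleton.1 (hP.map_mem (A w))
  have hPAP : P * A * P = α • P := by
    ext v
    obtain ⟨β, hβ⟩ := Submodule.mem_span_singleton.1 (hP.map_mem v)
    simp only [Module.End.mul_apply, smul_apply, ← hβ, map_smul, ← hα]
    exact smul_comm _ _ _
  have htrace : LinearMap.trace K M (P * A) = α := by
    calc LinearMap.trace K M (P * A) = LinearMap.trace K M (P * A * P) := by
          rw [trace_mul_comm K (P * A) P, ← mul_assoc, hP.isIdempotentElem.eq]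
      _ = α := by rw [hPAP, map_smul, hP.trace, finrank_span_singleton hw, Nat.cast_one,
          smul_eq_mul, mul_one]
  rw [htrace, hα]

theorem LinearMap.trace_adjoint {𝕜 E : Type*} [RCLike 𝕜] [NormedAddCommGroup E]
    [InnerProductSpace 𝕜 E] [FiniteDimensional 𝕜 E] (f : E →ₗ[𝕜] E) :
    trace 𝕜 E (adjoint f) = star (trace 𝕜 E f) := by
  let b := stdOrthonormalBasis 𝕜 E
  rw [trace_eq_matrix_trace 𝕜 b.toBasis, trace_eq_matrix_trace 𝕜 b.toBasis, toMatrix_adjoint,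
    Matrix.trace_conjTranspose]

namespace Representation

theorem isIrreducible_of_forall_submodule {k G V : Type*} [Field k] [Monoid G] [AddCommGroup V]
    [Module k V] [Nontrivial V] (ρ : Representation k G V)
    (h : ∀ W : Submodule k V, (∀ g, ∀ x ∈ W, ρ g x ∈ W) → W = ⊥ ∨ W = ⊤) :
    ρ.IsIrreducible where
  exists_pair_ne := ⟨⊥, ⊤, fun e => bot_ne_top (congrArg Subrepresentation.toSubmodule e)⟩
  eq_bot_or_eq_top W := (h W.toSubmodule fun g _ hx => W.apply_mem_toSubmodule g hx).imp
    Subrepresentation.ext Subrepresentation.ext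

theorem averageMap_eq {k G V : Type*} [CommRing k] [Group G] [AddCommGroup V] [Module k V]
    [Fintype G] [Invertible (Fintype.card G : k)] (ρ : Representation k G V) :
    ρ.averageMap = ⅟(Fintype.card G : k) • ∑ g, ρ g := by
  simp [averageMap, GroupAlgebra.average, map_sum]

theorem trace_averageMap_mul {k G V : Type*} [CommRing k] [Group G] [AddCommGroup V]
    [Module k V] [Fintype G] [Invertible (Fintype.card G : k)] (ρ : Representation k G V)
    (A : Module.End k V) :
    trace k V (ρ.averageMap * A) = ⅟(Fintype.card G : k) * ∑ g, trace k V (ρ g * A) := by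
  simp only [averageMap_eq, smul_mul_assoc, Finset.sum_mul, map_smul, map_sum, smul_eq_mul]

section SchurOrthogonality

variable {k G V : Type*} [Field k] [Group G] [AddCommGroup V] [Module k V] [FiniteDimensional k V]
  [Fintype G] [IsAlgClosed k] (ρ : Representation k G V) [ρ.IsIrreducible]

/-- The class sum commutes with `ρ`, so Schur's lemma applies to it. -/
theorem exists_sum_character_inv_smul_eq_smul_one :
    ∃ c : k, ∑ g, ρ.character g⁻¹ • ρ g = c • (1 : Module.End k V) := by
  let Z : IntertwiningMap ρ ρ := (∑ g, ρ.character g⁻¹ • ρ g).intertwiningMap_of_isIntertwiningMap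
    ρ ρ fun h v => by
      show ((∑ g, ρ.character g⁻¹ • ρ g) * ρ h) v = (ρ h * ∑ g, ρ.character g⁻¹ • ρ g) v
      congr 1
      simp only [Finset.sum_mul, Finset.mul_sum, smul_mul_assoc, mul_smul_comm, ← map_mul]
      refine Fintype.sum_equiv (MulAut.conj h⁻¹).toEquiv _ _ fun g => ?_
      simp only [MulEquiv.toEquiv_eq_coe, MulEquiv.coe_toEquiv, MulAut.conj_apply, inv_inv,
        mul_inv_rev, mul_assoc, mul_inv_cancel_left]
      rw [ρ.char_mul_comm, mul_inv_cancel_right]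
  obtain ⟨c, hc⟩ := IsIrreducible.algebraMap_intertwiningMap_bijective_of_isAlgClosed.2 Z
  exact ⟨c, (congrArg IntertwiningMap.toLinearMap hc).symm⟩

variable [Invertible (Nat.card G : k)]

theorem sum_character_mul_character_inv :
    ∑ g, ρ.character g * ρ.character g⁻¹ = Nat.card G := by
  have h := ρ.char_orthonormal ρ
  rw [if_pos ⟨Equiv.refl ρ⟩, inv_mul_eq_one₀ (Invertible.ne_zero _)] at h
  exact h.symm

theorem finrank_mul_sum_character_inv_mul_character_mul (a : G) :
    (finrank k V : k) * ∑ g, ρ.character g⁻¹ * ρ.character (g * a) =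
      Nat.card G * ρ.character a := by
  obtain ⟨c, hc⟩ := exists_sum_character_inv_smul_eq_smul_one ρ
  have htrace : c * finrank k V = Nat.card G := by
    have := congrArg (trace k V) hc
    simp only [map_sum, map_smul, trace_one, smul_eq_mul] at this
    rw [← this, ← sum_character_mul_character_inv ρ]
    exact Finset.sum_congr rfl fun g _ => mul_comm _ _
  have hmul : ∑ g, ρ.character g⁻¹ * ρ.character (g * a) = c * ρ.character a := by
    simpa only [Finset.sum_mul, map_sum, smul_mul_assoc, map_smul, one_mul, smul_eq_mul,
      ← map_mul, character] using congrArg (fun Z => trace k V (Z * ρ a)) hc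
  rw [hmul, ← htrace]
  ring

end SchurOrthogonality

section OrthogonalRepresentation

variable {G V : Type*} [Group G] [NormedAddCommGroup V] [InnerProductSpace ℝ V]
  {ρ : Representation ℝ G V}

theorem adjoint_apply_eq_apply_inv [FiniteDimensional ℝ V]
    (horth : ∀ g (u v : V), ⟪ρ g u, ρ g v⟫_ℝ = ⟪u, v⟫_ℝ) (g : G) : adjoint (ρ g) = ρ g⁻¹ :=
  ((eq_adjoint_iff _ _).2 fun x y => by
    rw [← horth g, ← Module.End.mul_apply, ← map_mul, mul_inv_cancel, map_one,
      Module.End.one_apply]).symm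

theorem character_inv_of_inner_map_map [FiniteDimensional ℝ V]
    (horth : ∀ g (u v : V), ⟪ρ g u, ρ g v⟫_ℝ = ⟪u, v⟫_ℝ) (g : G) :
    ρ.character g⁻¹ = ρ.character g := by
  rw [character, ← adjoint_apply_eq_apply_inv horth, trace_adjoint, star_trivial, character]

variable [Fintype G] [Invertible (Fintype.card G : ℝ)]

theorem inner_averageMap_of_mem_invariants (horth : ∀ g (u v : V), ⟪ρ g u, ρ g v⟫_ℝ = ⟪u, v⟫_ℝ)
    {w : V} (hw : w ∈ ρ.invariants) (v : V) : ⟪ρ.averageMap v, w⟫_ℝ = ⟪v, w⟫_ℝ := by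
  have h : ∀ g, ⟪ρ g v, w⟫_ℝ = ⟪v, w⟫_ℝ := fun g => by rw [← horth g v w, hw g]
  simp only [averageMap_eq, LinearMap.smul_apply, LinearMap.sum_apply, real_inner_smul_left,
    sum_inner, h, Finset.sum_const, Finset.card_univ, nsmul_eq_mul]
  rw [← mul_assoc, invOf_mul_self, one_mul]

theorem inner_apply_eq_trace_averageMap_mul_mul [FiniteDimensional ℝ V]
    (horth : ∀ g (u v : V), ⟪ρ g u, ρ g v⟫_ℝ = ⟪u, v⟫_ℝ) {w : V} (hw : ρ.invariants = ℝ ∙ w)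
    (A : Module.End ℝ V) : ⟪A w, w⟫_ℝ = trace ℝ V (ρ.averageMap * A) * ⟪w, w⟫_ℝ := by
  have hP : IsProj (ℝ ∙ w) ρ.averageMap := hw ▸ ρ.isProj_averageMap
  rw [← inner_averageMap_of_mem_invariants horth (hw ▸ Submodule.mem_span_singleton_self w),
    hP.apply_apply_eq_trace_mul_smul, real_inner_smul_left]

end OrthogonalRepresentation

end Representation

namespace IsIrrChar

variable {G : Type} [Group G] {φ : G → ℂ}

theorem apply_one_ne_zero (hφ : IsIrrChar G φ) : φ 1 ≠ 0 := by
  obtain ⟨W, _, _, _, τ, _, _, htr⟩ := hφ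
  rw [htr, map_one, trace_one]
  exact Nat.cast_ne_zero.2 finrank_pos.ne'

theorem sum_apply_inv_mul_apply_mul [Fintype G] (hφ : IsIrrChar G φ) (b : G) :
    ∑ g, φ g⁻¹ * φ (g * b) = Nat.card G * φ b / φ 1 := by
  have hφ1 := hφ.apply_one_ne_zero
  obtain ⟨W, _, _, _, τ, _, hsimple, htr⟩ := hφ
  have : τ.IsIrreducible := τ.isIrreducible_of_forall_submodule hsimple
  have : Invertible (Nat.card G : ℂ) := invertibleOfNonzero (Nat.cast_ne_zero.2 Nat.card_pos.ne')
  obtain rfl : φ = τ.character := funext htr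
  rw [eq_div_iff hφ1, Representation.char_one, mul_comm,
    τ.finrank_mul_sum_character_inv_mul_character_mul]

theorem sum_apply_mul_mul_apply_mul [Fintype G] (hφ : IsIrrChar G φ)
    (hinv : ∀ g, φ g⁻¹ = φ g) (x y : G) :
    ∑ u, φ (u * x) * φ (u * y) = Nat.card G * φ (x⁻¹ * y) / φ 1 := by
  rw [← hφ.sum_apply_inv_mul_apply_mul]
  refine Fintype.sum_equiv (Equiv.mulRight x) _ _ fun u => ?_
  simp only [Equiv.coe_mulRight]
  rw [hinv, mul_assoc u x, mul_inv_cancel_left]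

end IsIrrChar

def Wr.diag (U : Type) [Group U] : U →* Wr U :=
  SemidirectProduct.inl.comp ((MonoidHom.id U).prod (MonoidHom.id U))

@[simp]
theorem Wr.diag_apply {U : Type} [Group U] (u : U) : Wr.diag U u = SemidirectProduct.inl (u, u) :=
  rfl

section WreathProduct

variable {U : Type} {V : Type*} [Group U] [NormedAddCommGroup V] [InnerProductSpace ℝ V]
  {ρ : Representation ℝ (Wr U) V} {φ : U → ℂ}

theorem apply_inv_of_trace_inl [FiniteDimensional ℝ V]
    (horth : ∀ g (u v : V), ⟪ρ g u, ρ g v⟫_ℝ = ⟪u, v⟫_ℝ)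
    (htr : ∀ a b : U, ((trace ℝ V (ρ (SemidirectProduct.inl (a, b))) : ℝ) : ℂ) = φ a * φ b)
    (hφ1 : φ 1 ≠ 0) (u : U) : φ u⁻¹ = φ u := by
  have h := congrArg (fun r : ℝ => (r : ℂ))
    (ρ.character_inv_of_inner_map_map horth (SemidirectProduct.inl (u, 1)))
  simp only [Representation.character, ← map_inv, Prod.inv_mk, inv_one, htr] at h
  exact mul_right_cancel₀ hφ1 h

variable [Fintype U]

theorem finrank_invariants_comp_diag [FiniteDimensional ℝ V] (hφ : IsIrrChar U φ)
    (hφinv : ∀ u, φ u⁻¹ = φ u)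
    (htr : ∀ a b : U, ((trace ℝ V (ρ (SemidirectProduct.inl (a, b))) : ℝ) : ℂ) = φ a * φ b) :
    finrank ℝ (Representation.invariants (ρ.comp (Wr.diag U))) = 1 := by
  have : Invertible (Nat.card U : ℝ) := invertibleOfNonzero (Nat.cast_ne_zero.2 Nat.card_pos.ne')
  have h := congrArg (fun r : ℝ => (r : ℂ))
    (Representation.card_inv_mul_sum_char_eq_finrank (ρ.comp (Wr.diag U)))
  have hsq := hφ.sum_apply_mul_mul_apply_mul hφinv 1 1
  simp only [mul_one, inv_one] at hsq
  simp only [Complex.ofReal_mul, Complex.ofReal_inv, Complex.ofReal_natCast, Complex.ofReal_sum,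
    Representation.character, MonoidHom.comp_apply, Wr.diag_apply, htr, hsq] at h
  rw [mul_div_cancel_right₀ _ hφ.apply_one_ne_zero,
    inv_mul_cancel₀ (Nat.cast_ne_zero.2 Nat.card_pos.ne')] at h
  exact_mod_cast h.symm

theorem trace_averageMap_comp_diag_mul [Invertible (Fintype.card U : ℝ)] (hφ : IsIrrChar U φ)
    (hφinv : ∀ u, φ u⁻¹ = φ u)
    (htr : ∀ a b : U, ((trace ℝ V (ρ (SemidirectProduct.inl (a, b))) : ℝ) : ℂ) = φ a * φ b)
    (x y : U) :
    ((trace ℝ V (Representation.averageMap (ρ.comp (Wr.diag U)) *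
      ρ (SemidirectProduct.inl (x, y))) : ℝ) : ℂ) = φ (x⁻¹ * y) / φ 1 := by
  have hmul : ∀ u, ρ (Wr.diag U u) * ρ (SemidirectProduct.inl (x, y)) =
      ρ (SemidirectProduct.inl (u * x, u * y)) := fun u => by
    rw [← map_mul, Wr.diag_apply, ← map_mul, Prod.mk_mul_mk]
  rw [Representation.trace_averageMap_mul]
  simp only [MonoidHom.comp_apply, hmul, Complex.ofReal_mul, Complex.ofReal_sum, htr]
  rw [hφ.sum_apply_mul_mul_apply_mul hφinv, invOf_eq_inv, Complex.ofReal_inv,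
    Complex.ofReal_natCast, Nat.card_eq_fintype_card]
  field_simp

end WreathProduct

theorem stmt19_general {U : Type} [Group U] [Finite U]
    {V : Type} [NormedAddCommGroup V] [InnerProductSpace ℝ V] [FiniteDimensional ℝ V]
    (ρ : Representation ℝ (Wr U) V)
    (horth : ∀ g (u v : V), ⟪ρ g u, ρ g v⟫_ℝ = ⟪u, v⟫_ℝ)
    (w : V) (hw : w ≠ 0) (hwfix : ∀ h ∈ Hdiag U, ρ h w = w)
    -- the complex character `χ` of `V`:
    (χ : Wr U → ℂ)
    (hχ : ∀ g, χ g = ((LinearMap.trace ℝ V (ρ g) : ℝ) : ℂ))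
    (φ : U → ℂ) (hφ : IsIrrChar U φ)
    (hres : ∀ u v : U, χ (SemidirectProduct.inl (u, v)) = φ u * φ v) :
    ∀ x y : U,
      ((⟪ρ (SemidirectProduct.inl (x, y)) w, w⟫_ℝ / ⟪w, w⟫_ℝ : ℝ) : ℂ)
        = φ (x⁻¹ * y) / φ 1 := by
  cases nonempty_fintype U
  have : Invertible (Fintype.card U : ℝ) :=
    invertibleOfNonzero (Nat.cast_ne_zero.2 Fintype.card_ne_zero)
  have htr : ∀ a b : U, ((trace ℝ V (ρ (SemidirectProduct.inl (a, b))) : ℝ) : ℂ) = φ a * φ b :=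
    fun a b => (hχ _).symm.trans (hres a b)
  have hφinv := apply_inv_of_trace_inl horth htr hφ.apply_one_ne_zero
  have hinv : Representation.invariants (ρ.comp (Wr.diag U)) = ℝ ∙ w :=
    eq_span_singleton_of_mem_of_finrank_eq_one (finrank_invariants_comp_diag hφ hφinv htr)
      (fun u => hwfix _ (Subgroup.subset_closure (Or.inr ⟨u, rfl⟩))) hw
  intro x y
  rw [Representation.inner_apply_eq_trace_averageMap_mul_mul (ρ := ρ.comp (Wr.diag U))
    (fun u => horth _) hinv, mul_div_cancel_right₀ _ (inner_self_ne_zero.2 hw)]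
  exact trace_averageMap_comp_diag_mul hφ hφinv htr x y

/-- Let `G = U ≀ C₂`, `N = U × U`, `H = {1,t}{(u,u)}`, and let `V` be
an irreducible real `G`-inner-product space containing a nonzero `H`-fixed vector `w`,
whose (irreducible) complex character `χ` restricts to `φ × φ` on `N` with
`φ = φ̄ ∈ Irr U` and `χ(t(u,v)) = ν₂(φ)·φ(uv)`. Then for every `n = (x,y) ∈ N`:
`⟨w·n, w⟩/⟨w,w⟩ = φ(x⁻¹y)/φ(1)`. -/
theorem stmt19 {U : Type} [Group U] [Finite U]
    {V : Type} [NormedAddCommGroup V] [InnerProductSpace ℝ V] [FiniteDimensional ℝ V]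
    (ρ : Representation ℝ (Wr U) V)
    (horth : ∀ g (u v : V), ⟪ρ g u, ρ g v⟫_ℝ = ⟪u, v⟫_ℝ)
    (hnt : Nontrivial V)
    (hsimple : ∀ W : Submodule ℝ V, (∀ g, ∀ x ∈ W, ρ g x ∈ W) → W = ⊥ ∨ W = ⊤)
    (w : V) (hw : w ≠ 0) (hwfix : ∀ h ∈ Hdiag U, ρ h w = w)
    -- the complex character `χ` of `V`:
    (χ : Wr U → ℂ)
    (hχ : ∀ g, χ g = ((LinearMap.trace ℝ V (ρ g) : ℝ) : ℂ))
    (hχirr : IsIrrChar (Wr U) χ)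
    (φ : U → ℂ) (hφ : IsIrrChar U φ)
    (hφreal : φ = fun u => (starRingEnd ℂ) (φ u))
    (hres : ∀ u v : U, χ (SemidirectProduct.inl (u, v)) = φ u * φ v)
    (ht : ∀ u v : U, χ (tEl U * SemidirectProduct.inl (u, v))
      = ((Nat.card U : ℂ)⁻¹ * ∑ᶠ z : U, φ (z ^ 2)) * φ (u * v)) :
    ∀ x y : U,
      ((⟪ρ (SemidirectProduct.inl (x, y)) w, w⟫_ℝ / ⟪w, w⟫_ℝ : ℝ) : ℂ)
        = φ (x⁻¹ * y) / φ 1 :=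
  stmt19_general ρ horth w hw hwfix χ hχ φ hφ hres
end
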